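/- arXiv:1105.1715 — 2 statements merged into one kernel-verified Lean document; each statement's English description precedes it below -/
import Mathlib

section
/- The pair (x, y) with x = 4(t-a)(t-b)(t-c)(t-abc) and y = 8(t-a)(t-b)(t-c)(t-ab)(t-ac)(t-bc) satisfies the polynomial identity y² = (x + 4(a-1)(b-1)c·t(t-a)(t-b)) · (x + 4(b-1)(c-1)a·t(t-b)(t-c)) · (x + 4(c-1)(a-1)b·t(t-c)(t-a)) in the polynomial ring ℚ[a,b,c,t]. (This expresses that the trope T_{12} gives a section of the elliptic fibration 1 on the Kummer surface.) -/
open MvPolynomial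

theorem trope_T12_section_fibration1_general
    (a b c t x y : MvPolynomial (Fin 4) ℚ)
    (hx : x = 4 * (t - a) * (t - b) * (t - c) * (t - a * b * c))
    (hy : y = 8 * (t - a) * (t - b) * (t - c) * (t - a * b) * (t - a * c) * (t - b * c)) :
    y ^ 2 = (x + 4 * (a - 1) * (b - 1) * c * t * (t - a) * (t - b)) *
            (x + 4 * (b - 1) * (c - 1) * a * t * (t - b) * (t - c)) *
            (x + 4 * (c - 1) * (a - 1) * b * t * (t - c) * (t - a)) := by
  subst hx hy
  ring

/-- In `ℚ[a,b,c,t]` (with `a = X 0`, `b = X 1`, `c = X 2`, `t = X 3`), the trope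
`T₁₂` gives a section of elliptic fibration 1:
`x = 4(t-a)(t-b)(t-c)(t-abc)`, `y = 8(t-a)(t-b)(t-c)(t-ab)(t-ac)(t-bc)`
satisfy the Weierstrass equation of fibration 1. -/
theorem trope_T12_section_fibration1
    (a b c t x y : MvPolynomial (Fin 4) ℚ)
    (ha : a = X 0) (hb : b = X 1) (hc : c = X 2) (ht : t = X 3)
    (hx : x = 4 * (t - a) * (t - b) * (t - c) * (t - a * b * c))
    (hy : y = 8 * (t - a) * (t - b) * (t - c) * (t - a * b) * (t - a * c) * (t - b * c)) :
    y ^ 2 = (x + 4 * (a - 1) * (b - 1) * c * t * (t - a) * (t - b)) *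
            (x + 4 * (b - 1) * (c - 1) * a * t * (t - b) * (t - c)) *
            (x + 4 * (c - 1) * (a - 1) * b * t * (t - c) * (t - a)) :=
  trope_T12_section_fibration1_general a b c t x y hx hy
end

section
/- The pair (x₀, y₀) with x₀ = 4ab(t-1)(t-a)(t-b)(t-c) and y₀ = 4ab(t-1)(t-a)(t-b)(t-c)·((c-b-a+1)t² - 2(c-ab)t - abc + bc + ac - ab) satisfies the polynomial identity y₀² = x₀·(x₀² + x₀·P(t) + 16abc(t-1)²(t-a)²(t-b)²(t-c)²) in ℚ[a,b,c,t], where P(t) = (a²+b²+c²-2ab-2bc-2ca-2a-2b-2c+1)t⁴ + 8(abc+ab+bc+ca)t³ - 2((a+b+c+10)abc + (a+b)(b+c)(c+a) + ab+bc+ca)t² + 8abc(a+b+c+1)t + (a-1)²b²c² + (b-1)²a²c² + (c-1)²a²b² - 2abc(abc+a+b+c). (This expresses that N_{34} is a section of elliptic fibration 7, which has four A_3 fibers.) -/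
/-!
Write `D = (t-1)(t-a)(t-b)(t-c)`, so `x₀ = 4abD` and `y₀ = x₀ q` with `q` the quadratic factor
of `y₀`. Since `16abcD² = 4cD · x₀`, the curve equation at `(x₀, y₀)` is `x₀² q² = x₀² (x₀ + P + 4cD)`,
so everything rests on the identity `q² = P + 4(ab + c)D`.
-/

section

variable {R : Type*} [CommRing R] (a b c t : R)

theorem node_N34_quadratic_sq :
    ((c - b - a + 1) * t ^ 2 - 2 * (c - a * b) * t - a * b * c + b * c + a * c - a * b) ^ 2 =
      (a ^ 2 + b ^ 2 + c ^ 2 - 2 * a * b - 2 * b * c - 2 * c * a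
          - 2 * a - 2 * b - 2 * c + 1) * t ^ 4
        + 8 * (a * b * c + a * b + b * c + c * a) * t ^ 3
        - 2 * ((a + b + c + 10) * (a * b * c) + (a + b) * (b + c) * (c + a)
            + a * b + b * c + c * a) * t ^ 2
        + 8 * a * b * c * (a + b + c + 1) * t
        + (a - 1) ^ 2 * b ^ 2 * c ^ 2 + (b - 1) ^ 2 * a ^ 2 * c ^ 2
        + (c - 1) ^ 2 * a ^ 2 * b ^ 2
        - 2 * a * b * c * (a * b * c + a + b + c)
        + 4 * (a * b + c) * ((t - 1) * (t - a) * (t - b) * (t - c)) := by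
  ring

variable {a b c}

theorem mul_mem_curve_of_sq_eq {D q P : R} (hq : q ^ 2 = P + 4 * (a * b + c) * D) :
    (4 * a * b * D * q) ^ 2 =
      4 * a * b * D * ((4 * a * b * D) ^ 2 + 4 * a * b * D * P + 16 * a * b * c * D ^ 2) := by
  linear_combination (4 * a * b * D) ^ 2 * hq

end

open MvPolynomial

theorem node_N34_section_fibration7_general
    (a b c t x₀ y₀ P : MvPolynomial (Fin 4) ℚ)
    (hx : x₀ = 4 * a * b * (t - 1) * (t - a) * (t - b) * (t - c))
    (hy : y₀ = 4 * a * b * (t - 1) * (t - a) * (t - b) * (t - c) *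
      ((c - b - a + 1) * t ^ 2 - 2 * (c - a * b) * t
        - a * b * c + b * c + a * c - a * b))
    (hP : P = (a ^ 2 + b ^ 2 + c ^ 2 - 2 * a * b - 2 * b * c - 2 * c * a
          - 2 * a - 2 * b - 2 * c + 1) * t ^ 4
      + 8 * (a * b * c + a * b + b * c + c * a) * t ^ 3
      - 2 * ((a + b + c + 10) * (a * b * c) + (a + b) * (b + c) * (c + a)
          + a * b + b * c + c * a) * t ^ 2
      + 8 * a * b * c * (a + b + c + 1) * t
      + (a - 1) ^ 2 * b ^ 2 * c ^ 2 + (b - 1) ^ 2 * a ^ 2 * c ^ 2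
      + (c - 1) ^ 2 * a ^ 2 * b ^ 2
      - 2 * a * b * c * (a * b * c + a + b + c)) :
    y₀ ^ 2 = x₀ * (x₀ ^ 2 + x₀ * P
      + 16 * a * b * c * (t - 1) ^ 2 * (t - a) ^ 2 * (t - b) ^ 2 * (t - c) ^ 2) := by
  have hq := node_N34_quadratic_sq a b c t
  rw [← hP] at hq
  subst hx hy
  linear_combination mul_mem_curve_of_sq_eq hq

/-- In `ℚ[a,b,c,t]` (with `a = X 0`, `b = X 1`, `c = X 2`, `t = X 3`), the node
`N₃₄` gives a section of elliptic fibration 7 (four `A₃` fibers):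
`x₀ = 4ab(t-1)(t-a)(t-b)(t-c)` and
`y₀ = 4ab(t-1)(t-a)(t-b)(t-c)((c-b-a+1)t² - 2(c-ab)t - abc + bc + ac - ab)`
satisfy `y₀² = x₀(x₀² + x₀ P(t) + 16abc(t-1)²(t-a)²(t-b)²(t-c)²)`. -/
theorem node_N34_section_fibration7
    (a b c t x₀ y₀ P : MvPolynomial (Fin 4) ℚ)
    (ha : a = X 0) (hb : b = X 1) (hc : c = X 2) (ht : t = X 3)
    (hx : x₀ = 4 * a * b * (t - 1) * (t - a) * (t - b) * (t - c))
    (hy : y₀ = 4 * a * b * (t - 1) * (t - a) * (t - b) * (t - c) *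
      ((c - b - a + 1) * t ^ 2 - 2 * (c - a * b) * t
        - a * b * c + b * c + a * c - a * b))
    (hP : P = (a ^ 2 + b ^ 2 + c ^ 2 - 2 * a * b - 2 * b * c - 2 * c * a
          - 2 * a - 2 * b - 2 * c + 1) * t ^ 4
      + 8 * (a * b * c + a * b + b * c + c * a) * t ^ 3
      - 2 * ((a + b + c + 10) * (a * b * c) + (a + b) * (b + c) * (c + a)
          + a * b + b * c + c * a) * t ^ 2
      + 8 * a * b * c * (a + b + c + 1) * t
      + (a - 1) ^ 2 * b ^ 2 * c ^ 2 + (b - 1) ^ 2 * a ^ 2 * c ^ 2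
      + (c - 1) ^ 2 * a ^ 2 * b ^ 2
      - 2 * a * b * c * (a * b * c + a + b + c)) :
    y₀ ^ 2 = x₀ * (x₀ ^ 2 + x₀ * P
      + 16 * a * b * c * (t - 1) ^ 2 * (t - a) ^ 2 * (t - b) ^ 2 * (t - c) ^ 2) :=
  node_N34_section_fibration7_general a b c t x₀ y₀ P hx hy hP
end
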